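/- Let Q(n) be the set of density matrices supported on an N-dimensional subspace (i.e., N×N positive matrices with trace 1), equipped with the trace norm ‖·‖₁. Then the δ-bracketing entropy of Q(n) with respect to the positive semidefinite order and trace norm satisfies H_{B,1}(δ, Q(n)) ≤ C N² log(N/δ) for a universal constant C (one may take C = 1 + log 5), for all 0 < δ ≤ 1 and N ≥ 1. -/

import Mathlib

/-!
A density matrix `ρ` has diagonal entries in `[0, 1]` and, its `2 × 2` principal minors being
nonnegative, off-diagonal entries of modulus at most `1/2`. Hence the `N²` real coordinates of the
Hermitian matrix `ρ - 1/2` (real parts on and above the diagonal, imaginary parts below it) lie in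
`[-1/2, 1/2]`, and rounding each of them to one of `m` equally spaced points gives a Hermitian
centre `G` with `∑ᵢₖ |(ρ - G)ᵢₖ|² ≤ N (2N - 1) / (4m²)`. By Cauchy–Schwarz the quadratic form of
`ρ - G` is then bounded by `ε |x|²` as soon as `ε²` exceeds that sum, so `G - ε ≤ ρ ≤ G + ε`, a
bracket of trace-norm width `2Nε`. Taking `ε = δ/(2N)` and `m = ⌊3N²/(2δ)⌋` gives `m^(N²)`
brackets, and `log m ≤ log (3/2) + 2 log N + log (1/δ) ≤ (1 + log 5) log (N/δ)` because
`3/2 ≤ 2^(log 5 - 1)`, which follows from `3⁵ ≤ 2⁸` and `e⁸ ≤ 5⁵`. For `N = 1` the only density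
matrix is `1`, and one degenerate bracket suffices.
-/

open MeasureTheory
open scoped ComplexOrder

/-- Trace norm of a matrix: `Tr √(AᴴA)`. -/
noncomputable def traceNorm {n : ℕ} (A : Matrix (Fin n) (Fin n) ℂ) : ℝ :=
  ∑ i, Real.sqrt ((Matrix.posSemidef_conjTranspose_mul_self A).1.eigenvalues i)

open Matrix

namespace Matrix

variable {n 𝕜 : Type*} [RCLike 𝕜]

theorem norm_dotProduct_mulVec_sq_le [Fintype n] (M : Matrix n n 𝕜) (x : n → 𝕜) :
    ‖star x ⬝ᵥ (M *ᵥ x)‖ ^ 2 ≤ (∑ i, ∑ k, ‖M i k‖ ^ 2) * (∑ i, ‖x i‖ ^ 2) ^ 2 := by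
  have htri : ‖star x ⬝ᵥ (M *ᵥ x)‖ ≤ ∑ ik : n × n, ‖M ik.1 ik.2‖ * (‖x ik.1‖ * ‖x ik.2‖) := by
    simp only [dotProduct, mulVec, Fintype.sum_prod_type, Finset.mul_sum]
    refine (norm_sum_le _ _).trans (Finset.sum_le_sum fun i _ => (norm_sum_le _ _).trans ?_)
    refine Finset.sum_le_sum fun k _ => le_of_eq ?_
    simp only [Pi.star_apply, norm_mul, norm_star]
    ring
  calc ‖star x ⬝ᵥ (M *ᵥ x)‖ ^ 2
      ≤ (∑ ik : n × n, ‖M ik.1 ik.2‖ * (‖x ik.1‖ * ‖x ik.2‖)) ^ 2 :=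
        pow_le_pow_left₀ (norm_nonneg _) htri 2
    _ ≤ (∑ ik : n × n, ‖M ik.1 ik.2‖ ^ 2) * ∑ ik : n × n, (‖x ik.1‖ * ‖x ik.2‖) ^ 2 :=
        Finset.sum_mul_sq_le_sq_mul_sq _ _ _
    _ = (∑ i, ∑ k, ‖M i k‖ ^ 2) * (∑ i, ‖x i‖ ^ 2) ^ 2 := by
        simp only [Fintype.sum_prod_type, mul_pow, sq (∑ i, ‖x i‖ ^ 2), Finset.sum_mul_sum]

theorem IsHermitian.posSemidef_smul_one_add [Fintype n] [DecidableEq n] {M : Matrix n n 𝕜}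
    (hM : M.IsHermitian) {ε : ℝ} (hε : 0 ≤ ε) (hMε : ∑ i, ∑ k, ‖M i k‖ ^ 2 ≤ ε ^ 2) :
    (ε • (1 : Matrix n n 𝕜) + M).PosSemidef := by
  refine .of_dotProduct_mulVec_nonneg ((isHermitian_one.smul (IsSelfAdjoint.all ε)).add hM)
    fun x => ?_
  set q := star x ⬝ᵥ (M *ᵥ x)
  set s := ∑ i, ‖x i‖ ^ 2
  have hxx : star x ⬝ᵥ x = (s : 𝕜) := by
    simp [s, dotProduct, RCLike.conj_mul]
  have hq : ‖q‖ ≤ ε * s := by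
    refine pow_le_pow_iff_left₀ (norm_nonneg _) (by positivity) two_ne_zero |>.1 ?_
    calc ‖q‖ ^ 2 ≤ (∑ i, ∑ k, ‖M i k‖ ^ 2) * s ^ 2 := norm_dotProduct_mulVec_sq_le M x
      _ ≤ ε ^ 2 * s ^ 2 := by gcongr
      _ = (ε * s) ^ 2 := by ring
  rw [add_mulVec, dotProduct_add, smul_mulVec, one_mulVec, dotProduct_smul, hxx,
    RCLike.nonneg_iff]
  simp only [RCLike.real_smul_eq_coe_mul, map_add, ← RCLike.ofReal_mul, RCLike.ofReal_re,
    RCLike.ofReal_im, hM.im_star_dotProduct_mulVec_self, add_zero, and_true]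
  linarith [(abs_le.1 ((RCLike.abs_re_le_norm q).trans hq)).1]

theorem PosSemidef.norm_apply_sq_le {A : Matrix n n 𝕜} (hA : A.PosSemidef) (i k : n) :
    ‖A i k‖ ^ 2 ≤ RCLike.re (A i i) * RCLike.re (A k k) := by
  have hdet := (hA.submatrix ![i, k]).det_nonneg
  rw [det_fin_two, RCLike.nonneg_iff] at hdet
  have hki : A k i = star (A i k) := (hA.1.apply k i).symm
  simp only [submatrix_apply, cons_val_zero, cons_val_one, hki, RCLike.star_def,
    RCLike.mul_conj, map_sub] at hdet
  rw [← hA.1.coe_re_apply_self i, ← hA.1.coe_re_apply_self k, ← RCLike.ofReal_mul,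
    RCLike.ofReal_re] at hdet
  norm_cast at hdet
  linarith [hdet.1]

theorem PosSemidef.norm_sub_half_smul_one_apply_le [Fintype n] [DecidableEq n]
    {ρ : Matrix n n 𝕜} (hρ : ρ.PosSemidef) (htr : ρ.trace = 1) (i k : n) :
    ‖(ρ - (1 / 2 : ℝ) • (1 : Matrix n n 𝕜)) i k‖ ≤ 1 / 2 := by
  have hdiag : ∀ j, 0 ≤ RCLike.re (ρ j j) := fun j => (RCLike.nonneg_iff.1 hρ.diag_nonneg).1
  have hsum : ∑ j, RCLike.re (ρ j j) = 1 := by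
    simpa [trace, map_sum] using congrArg RCLike.re htr
  obtain rfl | hik := eq_or_ne i k
  · have hle : RCLike.re (ρ i i) ≤ 1 :=
      hsum ▸ Finset.single_le_sum (fun j _ => hdiag j) (Finset.mem_univ i)
    rw [sub_apply, smul_apply, one_apply_eq, ← hρ.1.coe_re_apply_self i,
      RCLike.real_smul_eq_coe_mul, mul_one, ← RCLike.ofReal_sub, RCLike.norm_ofReal, abs_le]
    constructor <;> linarith [hdiag i]
  · have hpair : RCLike.re (ρ i i) + RCLike.re (ρ k k) ≤ 1 :=
      hsum ▸ Finset.add_le_sum (fun j _ => hdiag j) (Finset.mem_univ i) (Finset.mem_univ k) hik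
    rw [sub_apply, smul_apply, one_apply_ne hik, smul_zero, sub_zero]
    refine pow_le_pow_iff_left₀ (norm_nonneg _) (by norm_num) two_ne_zero |>.1 ?_
    nlinarith [hρ.norm_apply_sq_le i k, hdiag i, hdiag k,
      sq_nonneg (RCLike.re (ρ i i) - RCLike.re (ρ k k))]

theorem fin_one_eq_one_of_trace_eq_one {R : Type*} [AddCommMonoidWithOne R]
    {ρ : Matrix (Fin 1) (Fin 1) R} (h : ρ.trace = 1) : ρ = 1 := by
  ext i k
  rw [trace_fin_one] at h
  rw [Subsingleton.elim i 0, Subsingleton.elim k 0, h, one_apply_eq]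

end Matrix

section HermitianCoords

variable {n : Type*} [LinearOrder n]

/-- The real-linear bijection between real matrices and Hermitian matrices: the entries of `P` on
and above the diagonal are the real parts, those below it the imaginary parts, of the entries of
`ofHermitianCoords P` on and above the diagonal. -/
def ofHermitianCoords (P : Matrix n n ℝ) : Matrix n n ℂ :=
  of fun i k => if i < k then ⟨P i k, P k i⟩ else if k < i then ⟨P k i, -P i k⟩ else (P i i : ℂ)

def hermitianCoords (H : Matrix n n ℂ) : Matrix n n ℝ :=
  of fun i k => if i ≤ k then (H i k).re else (H k i).im

theorem isHermitian_ofHermitianCoords (P : Matrix n n ℝ) : (ofHermitianCoords P).IsHermitian := by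
  ext i k
  rcases lt_trichotomy i k with h | rfl | h
  · simp [ofHermitianCoords, h, h.not_gt, Complex.ext_iff]
  · simp [ofHermitianCoords]
  · simp [ofHermitianCoords, h, h.not_gt, Complex.ext_iff]

theorem ofHermitianCoords_hermitianCoords {H : Matrix n n ℂ} (hH : H.IsHermitian) :
    ofHermitianCoords (hermitianCoords H) = H := by
  ext i k : 1
  rcases lt_trichotomy i k with h | rfl | h
  · simp [ofHermitianCoords, hermitianCoords, h, h.le, h.not_ge]
  · simpa [ofHermitianCoords, hermitianCoords] using hH.coe_re_apply_self i
  · rw [← hH.apply i k]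
    simp [ofHermitianCoords, hermitianCoords, h, h.le, h.not_gt, h.not_ge, Complex.ext_iff]

theorem ofHermitianCoords_sub (P Q : Matrix n n ℝ) :
    ofHermitianCoords P - ofHermitianCoords Q = ofHermitianCoords (P - Q) := by
  ext i k : 1
  simp only [ofHermitianCoords, Matrix.sub_apply, of_apply]
  split_ifs <;> simp [Complex.ext_iff, neg_add_eq_sub]

theorem norm_sq_ofHermitianCoords_apply (P : Matrix n n ℝ) (i k : n) :
    ‖ofHermitianCoords P i k‖ ^ 2 = if i = k then P i i ^ 2 else P i k ^ 2 + P k i ^ 2 := by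
  rcases lt_trichotomy i k with h | rfl | h
  · simp only [ofHermitianCoords, of_apply, if_pos h, if_neg h.ne, Complex.sq_norm,
      Complex.normSq_mk]
    ring
  · simp [ofHermitianCoords]
  · simp only [ofHermitianCoords, of_apply, if_neg h.not_gt, if_pos h, if_neg h.ne',
      Complex.sq_norm, Complex.normSq_mk]
    ring

theorem abs_hermitianCoords_apply_le {H : Matrix n n ℂ} {r : ℝ} (hH : ∀ i k, ‖H i k‖ ≤ r)
    (i k : n) : |hermitianCoords H i k| ≤ r := by
  simp only [hermitianCoords, of_apply]
  split_ifs
  · exact (Complex.abs_re_le_norm _).trans (hH i k)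
  · exact (Complex.abs_im_le_norm _).trans (hH k i)

theorem sum_norm_sq_ofHermitianCoords_le [Fintype n] {P : Matrix n n ℝ} {η : ℝ}
    (hP : ∀ i k, |P i k| ≤ η) :
    ∑ i, ∑ k, ‖ofHermitianCoords P i k‖ ^ 2 ≤
      Fintype.card n * (2 * Fintype.card n - 1) * η ^ 2 := by
  have hsq : ∀ i k, P i k ^ 2 ≤ η ^ 2 := fun i k => sq_le_sq.2 ((hP i k).trans (le_abs_self η))
  have hterm : ∀ i k, ‖ofHermitianCoords P i k‖ ^ 2 ≤ 2 * η ^ 2 - if i = k then η ^ 2 else 0 := by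
    intro i k
    rw [norm_sq_ofHermitianCoords_apply]
    split_ifs
    · linarith [hsq i i]
    · linarith [hsq i k, hsq k i]
  calc ∑ i, ∑ k, ‖ofHermitianCoords P i k‖ ^ 2
      ≤ ∑ i : n, ∑ k : n, (2 * η ^ 2 - if i = k then η ^ 2 else 0) :=
        Finset.sum_le_sum fun i _ => Finset.sum_le_sum fun k _ => hterm i k
    _ = Fintype.card n * (2 * Fintype.card n - 1) * η ^ 2 := by
        simp only [Finset.sum_sub_distrib, Finset.sum_const, Finset.card_univ, nsmul_eq_mul,
          Finset.sum_ite_eq, Finset.mem_univ, if_true]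
        ring

noncomputable def gridPoint (m : ℕ) (j : Fin m) : ℝ := (j + 1 / 2) / m - 1 / 2

theorem exists_abs_sub_gridPoint_le {m : ℕ} (hm : 0 < m) {x : ℝ} (hx : |x| ≤ 1 / 2) :
    ∃ j : Fin m, |x - gridPoint m j| ≤ 1 / (2 * m) := by
  obtain ⟨hx0, hx1⟩ := abs_le.1 hx
  have hmR : (0 : ℝ) < m := Nat.cast_pos.2 hm
  set y := m * (x + 1 / 2)
  set k := min ⌊y⌋₊ (m - 1) with hk
  have hkm : k < m := (min_le_right _ _).trans_lt (Nat.sub_lt hm Nat.one_pos)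
  refine ⟨⟨k, hkm⟩, ?_⟩
  have hlow : (k : ℝ) ≤ y :=
    (Nat.cast_le.2 (min_le_left _ _)).trans (Nat.floor_le (mul_nonneg hmR.le (by linarith)))
  have hhigh : y ≤ k + 1 := by
    rcases le_total ⌊y⌋₊ (m - 1) with h | h
    · rw [hk, min_eq_left h]
      exact (Nat.lt_floor_add_one y).le
    · rw [hk, min_eq_right h, Nat.cast_sub hm, Nat.cast_one, sub_add_cancel]
      exact (mul_le_iff_le_one_right hmR).2 (by linarith)
  have hdiff : x - gridPoint m ⟨k, hkm⟩ = (y - (k + 1 / 2)) / m := by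
    simp only [gridPoint, y]
    field_simp
    ring
  have hcentre : |y - (k + 1 / 2)| ≤ 1 / 2 := abs_le.2 ⟨by linarith, by linarith⟩
  rw [hdiff, abs_div, abs_of_pos hmR, div_le_div_iff₀ hmR (by positivity)]
  nlinarith

/-- The shift by `1/2` puts every Hermitian coordinate of a density matrix into `[-1/2, 1/2]`. -/
noncomputable def gridCenter (m : ℕ) (f : n → n → Fin m) : Matrix n n ℂ :=
  (1 / 2 : ℝ) • 1 + ofHermitianCoords (of fun i k => gridPoint m (f i k))

theorem isHermitian_gridCenter (m : ℕ) (f : n → n → Fin m) : (gridCenter m f).IsHermitian :=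
  (isHermitian_one.smul (IsSelfAdjoint.all _)).add (isHermitian_ofHermitianCoords _)

theorem exists_sum_norm_sq_sub_gridCenter_le [Fintype n] {m : ℕ} (hm : 0 < m)
    {ρ : Matrix n n ℂ} (hρ : ρ.PosSemidef) (htr : ρ.trace = 1) :
    ∃ f : n → n → Fin m, ∑ i, ∑ k, ‖(ρ - gridCenter m f) i k‖ ^ 2 ≤
      Fintype.card n * (2 * Fintype.card n - 1) * (1 / (2 * m)) ^ 2 := by
  set H := ρ - (1 / 2 : ℝ) • (1 : Matrix n n ℂ)
  have hH : H.IsHermitian := hρ.1.sub (isHermitian_one.smul (IsSelfAdjoint.all _))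
  choose f hf using fun i k => exists_abs_sub_gridPoint_le hm
    (abs_hermitianCoords_apply_le (hρ.norm_sub_half_smul_one_apply_le htr) i k)
  refine ⟨f, ?_⟩
  have hdiff : ρ - gridCenter m f =
      ofHermitianCoords (hermitianCoords H - of fun i k => gridPoint m (f i k)) := by
    rw [← ofHermitianCoords_sub, ofHermitianCoords_hermitianCoords hH, gridCenter,
      sub_add_eq_sub_sub]
  rw [hdiff]
  exact sum_norm_sq_ofHermitianCoords_le hf

end HermitianCoords

theorem traceNorm_smul_one {N : ℕ} {c : ℝ} (hc : 0 ≤ c) :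
    traceNorm (c • (1 : Matrix (Fin N) (Fin N) ℂ)) = N * c := by
  have heig : ∀ (A : Matrix (Fin N) (Fin N) ℂ) (hA : A.IsHermitian) (i : Fin N),
      A = algebraMap ℝ _ (c ^ 2) → hA.eigenvalues i = c ^ 2 := by
    rintro _ hA i rfl
    have : Nonempty (Fin N) := ⟨i⟩
    have hmem := hA.eigenvalues_mem_spectrum_real i
    rwa [spectrum.scalar_eq] at hmem
  have hsq : (c • (1 : Matrix (Fin N) (Fin N) ℂ))ᴴ * (c • 1) = algebraMap ℝ _ (c ^ 2) := by
    rw [conjTranspose_smul, conjTranspose_one, star_trivial, smul_mul_smul, mul_one, ← sq,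
      Algebra.algebraMap_eq_smul_one]
  simp only [traceNorm, heig _ _ _ hsq, Real.sqrt_sq hc, Finset.sum_const, Finset.card_univ,
    Fintype.card_fin, nsmul_eq_mul]

theorem exists_brackets_of_cube_mul_le_sq {N m : ℕ} (hm : 0 < m) {δ : ℝ} (hδ : 0 < δ)
    (hmδ : (N : ℝ) ^ 3 * (2 * N - 1) ≤ (m * δ) ^ 2) :
    ∃ L U : Fin (m ^ (N ^ 2)) → Matrix (Fin N) (Fin N) ℂ,
      (∀ j, (L j).IsHermitian ∧ (U j).IsHermitian ∧ traceNorm (U j - L j) ≤ δ) ∧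
      ∀ ρ : Matrix (Fin N) (Fin N) ℂ, ρ.PosSemidef → ρ.trace = 1 →
        ∃ j, (ρ - L j).PosSemidef ∧ (U j - ρ).PosSemidef := by
  set ε := δ / (2 * N)
  have hε0 : 0 ≤ ε := by positivity
  have hε : (N : ℝ) * (2 * N - 1) * (1 / (2 * m)) ^ 2 ≤ ε ^ 2 := by
    rcases N.eq_zero_or_pos with rfl | hN
    · simp only [CharP.cast_eq_zero, zero_mul]
      positivity
    have hmR : (0 : ℝ) < m := Nat.cast_pos.2 hm
    have hNR : (0 : ℝ) < N := Nat.cast_pos.2 hN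
    rw [show (N : ℝ) * (2 * N - 1) * (1 / (2 * m)) ^ 2 = N * (2 * N - 1) / (2 * m) ^ 2 by ring,
      div_pow, div_le_div_iff₀ (by positivity) (by positivity)]
    nlinarith
  let e : (Fin N → Fin N → Fin m) ≃ Fin (m ^ (N ^ 2)) :=
    Fintype.equivFinOfCardEq (by simp [← pow_mul, sq])
  have hI : (ε • (1 : Matrix (Fin N) (Fin N) ℂ)).IsHermitian :=
    isHermitian_one.smul (IsSelfAdjoint.all _)
  refine ⟨fun j => gridCenter m (e.symm j) - ε • 1, fun j => gridCenter m (e.symm j) + ε • 1,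
    fun j => ⟨(isHermitian_gridCenter _ _).sub hI, (isHermitian_gridCenter _ _).add hI, ?_⟩,
    fun ρ hρ htr => ?_⟩
  · rw [add_sub_sub_cancel, ← add_smul, traceNorm_smul_one (by positivity)]
    rcases N.eq_zero_or_pos with rfl | hN
    · simpa using hδ.le
    · exact (show (N : ℝ) * (ε + ε) = δ by simp only [ε]; field_simp; ring).le
  · obtain ⟨f, hf⟩ := exists_sum_norm_sq_sub_gridCenter_le hm hρ htr
    rw [Fintype.card_fin] at hf
    refine ⟨e f, ?_, ?_⟩ <;> simp only [Equiv.symm_apply_apply]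
    · rw [sub_sub_eq_add_sub, add_comm, add_sub_assoc]
      exact (hρ.1.sub (isHermitian_gridCenter m f)).posSemidef_smul_one_add hε0 (hf.trans hε)
    · rw [add_sub_right_comm, add_comm]
      refine ((isHermitian_gridCenter m f).sub hρ.1).posSemidef_smul_one_add hε0
        (le_of_eq_of_le ?_ (hf.trans hε))
      simp only [← neg_sub ρ, Matrix.neg_apply, norm_neg]

theorem Real.log_three_le_eight_fifths_mul_log_two : Real.log 3 ≤ 8 / 5 * Real.log 2 := by
  have h := Real.log_le_log (by norm_num) (show (3 : ℝ) ^ 5 ≤ 2 ^ 8 by norm_num)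
  rw [Real.log_pow, Real.log_pow] at h
  push_cast at h
  linarith

theorem Real.eight_fifths_le_log_five : 8 / 5 ≤ Real.log 5 := by
  rw [Real.le_log_iff_exp_le (by norm_num)]
  refine le_of_pow_le_pow_left₀ (n := 5) (by norm_num) (by norm_num) ?_
  calc Real.exp (8 / 5) ^ 5 = Real.exp 1 ^ 8 := by
        rw [← Real.exp_nat_mul, ← Real.exp_nat_mul]
        norm_num
    _ ≤ 2.7182818286 ^ 8 := pow_le_pow_left₀ (Real.exp_nonneg 1) Real.exp_one_lt_d9.le 8
    _ ≤ 5 ^ 5 := by norm_num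

theorem log_le_one_add_log_five_mul_log_div {N δ x : ℝ} (hN : 2 ≤ N) (hδ0 : 0 < δ)
    (hδ1 : δ ≤ 1) (hx0 : 0 < x) (hx : x ≤ 3 / 2 * N ^ 2 / δ) :
    Real.log x ≤ (1 + Real.log 5) * Real.log (N / δ) := by
  have hN0 : 0 < N := by linarith
  have hlogx : Real.log x ≤ Real.log 3 - Real.log 2 + 2 * Real.log N - Real.log δ := by
    refine (Real.log_le_log hx0 hx).trans_eq ?_
    rw [Real.log_div (by positivity) hδ0.ne', Real.log_mul (by norm_num) (by positivity),
      Real.log_div (by norm_num) (by norm_num), Real.log_pow]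
    push_cast
    ring
  have hlog2 : 0 < Real.log 2 := Real.log_pos (by norm_num)
  have hlogN : Real.log 2 ≤ Real.log N := Real.log_le_log (by norm_num) hN
  have hlogδ : Real.log δ ≤ 0 := Real.log_nonpos hδ0.le hδ1
  have h5 := Real.eight_fifths_le_log_five
  rw [Real.log_div hN0.ne' hδ0.ne']
  nlinarith [Real.log_three_le_eight_fifths_mul_log_two,
    mul_nonneg (sub_nonneg.2 h5) (hlog2.le.trans hlogN)]

theorem exists_nat_cube_mul_le_sq_and_le {N δ : ℝ} (hN : 2 ≤ N) (hδ0 : 0 < δ) (hδ1 : δ ≤ 1) :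
    ∃ m : ℕ, 0 < m ∧ N ^ 3 * (2 * N - 1) ≤ (m * δ) ^ 2 ∧ (m : ℝ) ≤ 3 / 2 * N ^ 2 / δ := by
  have hx : 1 ≤ 3 / 2 * N ^ 2 / δ := by
    rw [le_div_iff₀ hδ0]
    nlinarith
  refine ⟨⌊3 / 2 * N ^ 2 / δ⌋₊, Nat.floor_pos.2 hx, ?_, Nat.floor_le (by linarith)⟩
  have hlow : 3 / 2 * N ^ 2 - 1 ≤ ⌊3 / 2 * N ^ 2 / δ⌋₊ * δ := by
    have := (Nat.sub_one_lt_floor (3 / 2 * N ^ 2 / δ)).le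
    rw [sub_le_iff_le_add, div_le_iff₀ hδ0] at this
    nlinarith
  have hpoly : N ^ 3 * (2 * N - 1) ≤ (3 / 2 * N ^ 2 - 1) ^ 2 := by nlinarith [sq_nonneg N]
  exact hpoly.trans (pow_le_pow_left₀ (by nlinarith) hlow 2)

/-- the δ-bracketing entropy (with respect to the operator order and the
trace norm) of the set of N×N density matrices is at most `C N² log(N/δ)` with
`C = 1 + log 5`: there is a family of at most `exp(C N² log(N/δ))` brackets
`[ρ_j^L, ρ_j^U]` of self-adjoint matrices with `‖ρ_j^U - ρ_j^L‖₁ ≤ δ` covering all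
density matrices. -/
theorem bracketing_entropy_density_matrices (N : ℕ) (hN : 1 ≤ N) (δ : ℝ)
    (hδ0 : 0 < δ) (hδ1 : δ ≤ 1) :
    ∃ (p : ℕ) (L U : Fin p → Matrix (Fin N) (Fin N) ℂ), 0 < p ∧
      (∀ j, (L j).IsHermitian ∧ (U j).IsHermitian ∧ traceNorm (U j - L j) ≤ δ) ∧
      (∀ ρ : Matrix (Fin N) (Fin N) ℂ, ρ.PosSemidef → ρ.trace = 1 →
        ∃ j, (ρ - L j).PosSemidef ∧ (U j - ρ).PosSemidef) ∧
      Real.log p ≤ (1 + Real.log 5) * N ^ 2 * Real.log (N / δ) := by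
  obtain rfl | hN2 := hN.eq_or_lt
  · refine ⟨1, fun _ => 1, fun _ => 1, one_pos,
      fun _ => ⟨isHermitian_one, isHermitian_one, ?_⟩, fun ρ _ htr => ⟨0, ?_⟩, ?_⟩
    · rw [sub_self, ← zero_smul ℝ (1 : Matrix (Fin 1) (Fin 1) ℂ), traceNorm_smul_one le_rfl]
      simpa using hδ0.le
    · rw [fin_one_eq_one_of_trace_eq_one htr, sub_self]
      exact ⟨.zero, .zero⟩
    · have := Real.log_nonneg (one_le_one_div hδ0 hδ1)
      have := Real.log_nonneg (by norm_num : (1 : ℝ) ≤ 5)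
      simp only [Nat.cast_one, Real.log_one, one_pow, mul_one]
      positivity
  · have hNR : (2 : ℝ) ≤ N := by exact_mod_cast hN2
    obtain ⟨m, hm, hmδ, hm_le⟩ := exists_nat_cube_mul_le_sq_and_le hNR hδ0 hδ1
    obtain ⟨L, U, hLU, hcover⟩ := exists_brackets_of_cube_mul_le_sq hm hδ0 hmδ
    refine ⟨m ^ (N ^ 2), L, U, pow_pos hm _, hLU, hcover, ?_⟩
    have hlog := log_le_one_add_log_five_mul_log_div hNR hδ0 hδ1 (Nat.cast_pos.2 hm) hm_le
    rw [Nat.cast_pow, Real.log_pow, Nat.cast_pow, mul_comm _ ((N : ℝ) ^ 2), mul_assoc]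
    exact mul_le_mul_of_nonneg_left hlog (by positivity)
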